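/- arXiv:2109.09717 — 4 statements merged into one kernel-verified Lean document; each statement's English description precedes it below -/
import Mathlib

section
/- Assume that for every initial mean-field state μ₀ ∈ Δ_X there exists an MFG Nash equilibrium consistent with μ₀, and that any two MFG Nash equilibria consistent with the same μ₀ have the same mean-field flow. Then there exists a Master policy, i.e., a population-dependent policy π̃* : X × Δ_X → Δ_A such that for every μ₀ ∈ Δ_X the pair induced by π̃* from μ₀ is an MFG Nash equilibrium consistent with μ₀. -/
open scoped BigOperators

section MFGDefs

variable {X A : Type*} [Fintype X] [Fintype A]

/-- One-step population update `φ(μ, π)`: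
`φ(μ,π)(x) = ∑_{x'} μ(x') ∑_a π(a|x') p(x|x',a,μ)`. -/
def popStep (p : X → A → (X → ℝ) → X → ℝ) (μ : X → ℝ) (π : X → A → ℝ) : X → ℝ :=
  fun x => ∑ x' : X, μ x' * ∑ a : A, π x' a * p x' a μ x

/-- MF flow `Φ(μ₀, 𝛑)` induced by a (population-agnostic) policy from an initial MF state. -/
def mfFlow (p : X → A → (X → ℝ) → X → ℝ) (μ₀ : X → ℝ) (πs : ℕ → X → A → ℝ) : ℕ → X → ℝ
  | 0 => μ₀
  | n + 1 => popStep p (mfFlow p μ₀ πs n) (πs n)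

/-- The agent's state marginals `ν`. -/
def marginals (p : X → A → (X → ℝ) → X → ℝ) (μ₀ : X → ℝ) (πs : ℕ → X → A → ℝ)
    (μs : ℕ → X → ℝ) : ℕ → X → ℝ
  | 0 => μ₀
  | n + 1 => fun x =>
      ∑ x' : X, marginals p μ₀ πs μs n x' * ∑ a : A, πs n x' a * p x' a (μs n) x

/-- Discounted total reward `J(μ₀, 𝛑; 𝛍)`. -/
noncomputable def totalReward (p : X → A → (X → ℝ) → X → ℝ) (r : X → A → (X → ℝ) → ℝ)
    (γ : ℝ) (μ₀ : X → ℝ) (πs : ℕ → X → A → ℝ) (μs : ℕ → X → ℝ) : ℝ :=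
  ∑' n : ℕ, γ ^ n * ∑ x : X, marginals p μ₀ πs μs n x * ∑ a : A, πs n x a * r x a (μs n)

/-- A population-agnostic policy: a sequence of stationary simplex-valued policies. -/
def IsPolicy (πs : ℕ → X → A → ℝ) : Prop := ∀ n x, πs n x ∈ stdSimplex ℝ A

/-- MFG Nash equilibrium consistent with `μ₀`: the flow is the one induced by the policy,
and the policy attains the best possible total reward against this flow. -/
def IsMFGNash (p : X → A → (X → ℝ) → X → ℝ) (r : X → A → (X → ℝ) → ℝ)
    (γ : ℝ) (μ₀ : X → ℝ) (πs : ℕ → X → A → ℝ) (μs : ℕ → X → ℝ) : Prop :=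
  IsPolicy πs ∧ μs = mfFlow p μ₀ πs ∧
    ∀ πs' : ℕ → X → A → ℝ, IsPolicy πs' →
      totalReward p r γ μ₀ πs' μs ≤ totalReward p r γ μ₀ πs μs

end MFGDefs

section MasterDefs

variable {X A : Type*} [Fintype X] [Fintype A]

/-- MF flow induced by a population-dependent policy `π̃ : X × Δ_X → Δ_A` from `μ₀`. -/
def indFlow (p : X → A → (X → ℝ) → X → ℝ) (πt : X → (X → ℝ) → A → ℝ) (μ₀ : X → ℝ) :
    ℕ → X → ℝ
  | 0 => μ₀
  | n + 1 => popStep p (indFlow p πt μ₀ n) (fun x => πt x (indFlow p πt μ₀ n))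

/-- Population-agnostic policy induced by a population-dependent policy from `μ₀`. -/
def indPolicy (p : X → A → (X → ℝ) → X → ℝ) (πt : X → (X → ℝ) → A → ℝ) (μ₀ : X → ℝ) :
    ℕ → X → A → ℝ :=
  fun n x => πt x (indFlow p πt μ₀ n)

end MasterDefs

section MFGAux

variable {X A : Type*} [Fintype X] [Fintype A]

lemma step_mem_stdSimplex (ν : X → ℝ) (π : X → A → ℝ) (q : X → A → X → ℝ)
    (hν : ν ∈ stdSimplex ℝ X) (hπ : ∀ x, π x ∈ stdSimplex ℝ A)
    (hq : ∀ x a, q x a ∈ stdSimplex ℝ X) :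
    (fun x => ∑ x' : X, ν x' * ∑ a : A, π x' a * q x' a x) ∈ stdSimplex ℝ X := by
  refine ⟨fun x => ?_, ?_⟩
  · exact Finset.sum_nonneg fun x' _ => mul_nonneg (hν.1 x')
      (Finset.sum_nonneg fun a _ => mul_nonneg ((hπ x').1 a) ((hq x' a).1 x))
  · show ∑ x : X, ∑ x' : X, ν x' * ∑ a : A, π x' a * q x' a x = 1
    rw [Finset.sum_comm]
    have h1 : ∀ x' : X, ∑ x : X, ν x' * ∑ a : A, π x' a * q x' a x = ν x' := by
      intro x'
      rw [← Finset.mul_sum, Finset.sum_comm]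
      have h2 : ∑ a : A, ∑ x : X, π x' a * q x' a x = 1 := by
        have h3 : ∀ a : A, ∑ x : X, π x' a * q x' a x = π x' a := by
          intro a; rw [← Finset.mul_sum, (hq x' a).2, mul_one]
        rw [Finset.sum_congr rfl fun a _ => h3 a, (hπ x').2]
      rw [h2, mul_one]
    rw [Finset.sum_congr rfl fun x' _ => h1 x', hν.2]

lemma mfFlow_mem {p : X → A → (X → ℝ) → X → ℝ}
    (hp : ∀ x a μ, μ ∈ stdSimplex ℝ X → p x a μ ∈ stdSimplex ℝ X)
    {μ₀ : X → ℝ} {πs : ℕ → X → A → ℝ} (hμ₀ : μ₀ ∈ stdSimplex ℝ X) (hπ : IsPolicy πs) :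
    ∀ n, mfFlow p μ₀ πs n ∈ stdSimplex ℝ X := by
  intro n
  induction n with
  | zero => exact hμ₀
  | succ n ih => exact step_mem_stdSimplex _ _ _ ih (hπ n) (fun x a => hp x a _ ih)

lemma marginals_mem {p : X → A → (X → ℝ) → X → ℝ}
    (hp : ∀ x a μ, μ ∈ stdSimplex ℝ X → p x a μ ∈ stdSimplex ℝ X)
    {μ₀ : X → ℝ} {πs : ℕ → X → A → ℝ} {μs : ℕ → X → ℝ}
    (hμ₀ : μ₀ ∈ stdSimplex ℝ X) (hπ : IsPolicy πs) (hμs : ∀ n, μs n ∈ stdSimplex ℝ X) :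
    ∀ n, marginals p μ₀ πs μs n ∈ stdSimplex ℝ X := by
  intro n
  induction n with
  | zero => exact hμ₀
  | succ n ih => exact step_mem_stdSimplex _ _ _ ih (hπ n) (fun x a => hp x a _ (hμs n))

lemma term_abs_le {C : ℝ} {ν : X → ℝ} {π : X → A → ℝ} {g : X → A → ℝ}
    (hν : ν ∈ stdSimplex ℝ X) (hπ : ∀ x, π x ∈ stdSimplex ℝ A)
    (hg : ∀ x a, |g x a| ≤ C) :
    |∑ x : X, ν x * ∑ a : A, π x a * g x a| ≤ C := by
  have inner : ∀ x, |∑ a : A, π x a * g x a| ≤ C := by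
    intro x
    calc |∑ a : A, π x a * g x a| ≤ ∑ a : A, |π x a * g x a| := Finset.abs_sum_le_sum_abs _ _
      _ ≤ ∑ a : A, π x a * C := by
          refine Finset.sum_le_sum fun a _ => ?_
          rw [abs_mul, abs_of_nonneg ((hπ x).1 a)]
          exact mul_le_mul_of_nonneg_left (hg x a) ((hπ x).1 a)
      _ = C := by rw [← Finset.sum_mul, (hπ x).2, one_mul]
  calc |∑ x : X, ν x * ∑ a : A, π x a * g x a|
      ≤ ∑ x : X, |ν x * ∑ a : A, π x a * g x a| := Finset.abs_sum_le_sum_abs _ _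
    _ ≤ ∑ x : X, ν x * C := by
        refine Finset.sum_le_sum fun x _ => ?_
        rw [abs_mul, abs_of_nonneg (hν.1 x)]
        exact mul_le_mul_of_nonneg_left (inner x) (hν.1 x)
    _ = C := by rw [← Finset.sum_mul, hν.2, one_mul]

lemma summable_tr {p : X → A → (X → ℝ) → X → ℝ} {r : X → A → (X → ℝ) → ℝ} {γ C : ℝ}
    (hp : ∀ x a μ, μ ∈ stdSimplex ℝ X → p x a μ ∈ stdSimplex ℝ X)
    (hr : ∀ x a μ, μ ∈ stdSimplex ℝ X → |r x a μ| ≤ C)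
    (hγ0 : 0 ≤ γ) (hγ1 : γ < 1)
    {μ₀ : X → ℝ} {πs : ℕ → X → A → ℝ} {μs : ℕ → X → ℝ}
    (hμ₀ : μ₀ ∈ stdSimplex ℝ X) (hπ : IsPolicy πs) (hμs : ∀ n, μs n ∈ stdSimplex ℝ X) :
    Summable (fun n => γ ^ n * ∑ x : X, marginals p μ₀ πs μs n x *
      ∑ a : A, πs n x a * r x a (μs n)) := by
  have hm := marginals_mem hp hμ₀ hπ hμs
  refine Summable.of_norm_bounded (g := fun n => C * γ ^ n)
    (Summable.mul_left C (summable_geometric_of_lt_one hγ0 hγ1)) fun n => ?_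
  rw [Real.norm_eq_abs, abs_mul, abs_pow, abs_of_nonneg hγ0, mul_comm]
  exact mul_le_mul_of_nonneg_right
    (term_abs_le (hm n) (hπ n) fun x a => hr x a _ (hμs n)) (pow_nonneg hγ0 n)

lemma tr_abs_le {p : X → A → (X → ℝ) → X → ℝ} {r : X → A → (X → ℝ) → ℝ} {γ C : ℝ}
    (hp : ∀ x a μ, μ ∈ stdSimplex ℝ X → p x a μ ∈ stdSimplex ℝ X)
    (hr : ∀ x a μ, μ ∈ stdSimplex ℝ X → |r x a μ| ≤ C)
    (hγ0 : 0 ≤ γ) (hγ1 : γ < 1)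
    {μ₀ : X → ℝ} {πs : ℕ → X → A → ℝ} {μs : ℕ → X → ℝ}
    (hμ₀ : μ₀ ∈ stdSimplex ℝ X) (hπ : IsPolicy πs) (hμs : ∀ n, μs n ∈ stdSimplex ℝ X) :
    |totalReward p r γ μ₀ πs μs| ≤ C * (1 - γ)⁻¹ := by
  have hm := marginals_mem hp hμ₀ hπ hμs
  have hb : ∀ n : ℕ, ‖γ ^ n * ∑ x : X, marginals p μ₀ πs μs n x *
      ∑ a : A, πs n x a * r x a (μs n)‖ ≤ C * γ ^ n := by
    intro n
    rw [Real.norm_eq_abs, abs_mul, abs_pow, abs_of_nonneg hγ0, mul_comm]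
    exact mul_le_mul_of_nonneg_right
      (term_abs_le (hm n) (hπ n) fun x a => hr x a _ (hμs n)) (pow_nonneg hγ0 n)
  have hgeom : Summable (fun n : ℕ => C * γ ^ n) :=
    Summable.mul_left C (summable_geometric_of_lt_one hγ0 hγ1)
  have hsn : Summable (fun n : ℕ => ‖γ ^ n * ∑ x : X, marginals p μ₀ πs μs n x *
      ∑ a : A, πs n x a * r x a (μs n)‖) :=
    Summable.of_nonneg_of_le (fun n => norm_nonneg _) hb hgeom
  unfold totalReward
  calc |∑' n : ℕ, γ ^ n * ∑ x : X, marginals p μ₀ πs μs n x *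
        ∑ a : A, πs n x a * r x a (μs n)|
      ≤ ∑' n : ℕ, ‖γ ^ n * ∑ x : X, marginals p μ₀ πs μs n x *
        ∑ a : A, πs n x a * r x a (μs n)‖ := by
        rw [← Real.norm_eq_abs]; exact norm_tsum_le_tsum_norm hsn
    _ ≤ ∑' n : ℕ, C * γ ^ n := Summable.tsum_le_tsum hb hsn hgeom
    _ = C * (1 - γ)⁻¹ := by rw [tsum_mul_left, tsum_geometric_of_lt_one hγ0 hγ1]

lemma marginals_eq_flow {p : X → A → (X → ℝ) → X → ℝ} {μ₀ : X → ℝ} {πs : ℕ → X → A → ℝ}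
    {μs : ℕ → X → ℝ} (h : μs = mfFlow p μ₀ πs) :
    ∀ n, marginals p μ₀ πs μs n = μs n := by
  subst h
  intro n
  induction n with
  | zero => rfl
  | succ n ih =>
    funext x
    show ∑ x' : X, marginals p μ₀ πs (mfFlow p μ₀ πs) n x' *
        ∑ a : A, πs n x' a * p x' a (mfFlow p μ₀ πs n) x = _
    rw [ih]
    rfl

lemma marginals_shift (p : X → A → (X → ℝ) → X → ℝ) (μ₀ : X → ℝ) (πs : ℕ → X → A → ℝ)
    (μs : ℕ → X → ℝ) : ∀ n, marginals p μ₀ πs μs (n + 1)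
      = marginals p (marginals p μ₀ πs μs 1) (fun k => πs (k + 1)) (fun k => μs (k + 1)) n := by
  intro n
  induction n with
  | zero => rfl
  | succ n ih =>
    funext x
    show ∑ x' : X, marginals p μ₀ πs μs (n + 1) x' *
        ∑ a : A, πs (n + 1) x' a * p x' a (μs (n + 1)) x = _
    rw [ih]
    rfl

lemma totalReward_shift (p : X → A → (X → ℝ) → X → ℝ) (r : X → A → (X → ℝ) → ℝ) (γ : ℝ)
    (μ₀ : X → ℝ) (πs : ℕ → X → A → ℝ) (μs : ℕ → X → ℝ)
    (h1 : Summable fun n => γ ^ n * ∑ x : X, marginals p μ₀ πs μs n x *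
      ∑ a : A, πs n x a * r x a (μs n)) :
    totalReward p r γ μ₀ πs μs
      = (∑ x : X, μ₀ x * ∑ a : A, πs 0 x a * r x a (μs 0))
        + γ * totalReward p r γ (marginals p μ₀ πs μs 1)
            (fun k => πs (k + 1)) (fun k => μs (k + 1)) := by
  unfold totalReward
  rw [Summable.tsum_eq_zero_add h1]
  have h0 : (γ ^ 0 * ∑ x : X, marginals p μ₀ πs μs 0 x * ∑ a : A, πs 0 x a * r x a (μs 0))
      = ∑ x : X, μ₀ x * ∑ a : A, πs 0 x a * r x a (μs 0) := by
    rw [pow_zero, one_mul]; rfl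
  rw [h0]
  congr 1
  rw [← tsum_mul_left]
  refine tsum_congr fun n => ?_
  show γ ^ (n + 1) * ∑ x : X, marginals p μ₀ πs μs (n + 1) x *
      ∑ a : A, πs (n + 1) x a * r x a (μs (n + 1))
    = γ * (γ ^ n * ∑ x : X, marginals p (marginals p μ₀ πs μs 1)
        (fun k => πs (k + 1)) (fun k => μs (k + 1)) n x *
        ∑ a : A, πs (n + 1) x a * r x a (μs (n + 1)))
  rw [← marginals_shift p μ₀ πs μs n]
  ring

lemma nash_shift {p : X → A → (X → ℝ) → X → ℝ} {r : X → A → (X → ℝ) → ℝ} {γ C : ℝ}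
    (hp : ∀ x a μ, μ ∈ stdSimplex ℝ X → p x a μ ∈ stdSimplex ℝ X)
    (hr : ∀ x a μ, μ ∈ stdSimplex ℝ X → |r x a μ| ≤ C)
    (hγ0 : 0 < γ) (hγ1 : γ < 1)
    {μ₀ : X → ℝ} {πs : ℕ → X → A → ℝ} {μs : ℕ → X → ℝ}
    (hμ₀ : μ₀ ∈ stdSimplex ℝ X) (hN : IsMFGNash p r γ μ₀ πs μs) :
    IsMFGNash p r γ (μs 1) (fun k => πs (k + 1)) (fun k => μs (k + 1)) := by
  obtain ⟨hpol, hfl, hopt⟩ := hN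
  have hμs : ∀ n, μs n ∈ stdSimplex ℝ X := by
    intro n; rw [hfl]; exact mfFlow_mem hp hμ₀ hpol n
  have hm : ∀ n, marginals p μ₀ πs μs n = μs n := marginals_eq_flow hfl
  refine ⟨fun n x => hpol (n + 1) x, ?_, ?_⟩
  · funext n
    induction n with
    | zero => rfl
    | succ n ih =>
      show μs (n + 1 + 1) = popStep p (mfFlow p (μs 1) (fun k => πs (k + 1)) n) (πs (n + 1))
      rw [← ih, hfl]
      rfl
  · intro πs' hπs'
    set τ : ℕ → X → A → ℝ := fun n => Nat.rec (πs 0) (fun k _ => πs' k) n with hτ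
    have hτpol : IsPolicy τ := by
      intro n x
      cases n with
      | zero => exact hpol 0 x
      | succ k => exact hπs' k x
    have hmτ1 : marginals p μ₀ τ μs 1 = μs 1 := by
      funext x
      show ∑ x' : X, μ₀ x' * ∑ a : A, πs 0 x' a * p x' a (μs 0) x = μs 1 x
      rw [hfl]
      rfl
    have hsτ := summable_tr hp hr hγ0.le hγ1 hμ₀ hτpol hμs
    have hsπ := summable_tr hp hr hγ0.le hγ1 hμ₀ hpol hμs
    have key := hopt τ hτpol
    rw [totalReward_shift p r γ μ₀ τ μs hsτ, totalReward_shift p r γ μ₀ πs μs hsπ] at key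
    rw [hmτ1, hm 1] at key
    have hshiftτ : (fun k => τ (k + 1)) = πs' := rfl
    rw [hshiftτ] at key
    have ht0 : (∑ x : X, μ₀ x * ∑ a : A, τ 0 x a * r x a (μs 0))
        = ∑ x : X, μ₀ x * ∑ a : A, πs 0 x a * r x a (μs 0) := rfl
    rw [ht0] at key
    have key2 := (add_le_add_iff_left
      (∑ x : X, μ₀ x * ∑ a : A, πs 0 x a * r x a (μs 0))).1 key
    exact le_of_mul_le_mul_left key2 hγ0

lemma master_aux {p : X → A → (X → ℝ) → X → ℝ} {r : X → A → (X → ℝ) → ℝ} {γ C : ℝ}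
    (hp : ∀ x a μ, μ ∈ stdSimplex ℝ X → p x a μ ∈ stdSimplex ℝ X)
    (hr : ∀ x a μ, μ ∈ stdSimplex ℝ X → |r x a μ| ≤ C)
    (hγ0 : 0 < γ) (hγ1 : γ < 1)
    (Pi : (X → ℝ) → ℕ → X → A → ℝ) (M : (X → ℝ) → ℕ → X → ℝ)
    (hN : ∀ μ, μ ∈ stdSimplex ℝ X → IsMFGNash p r γ μ (Pi μ) (M μ))
    (huniq : ∀ μ₀ ∈ stdSimplex ℝ X, ∀ (πs πs' : ℕ → X → A → ℝ) (μs μs' : ℕ → X → ℝ),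
      IsMFGNash p r γ μ₀ πs μs → IsMFGNash p r γ μ₀ πs' μs' → μs = μs')
    (πt : X → (X → ℝ) → A → ℝ) (hπt : ∀ x μ, πt x μ = Pi μ 0 x)
    {μ₀ : X → ℝ} (hμ₀ : μ₀ ∈ stdSimplex ℝ X) :
    IsMFGNash p r γ μ₀ (indPolicy p πt μ₀) (indFlow p πt μ₀) := by
  obtain ⟨hpol0, hfl0, hopt0⟩ := hN μ₀ hμ₀
  have hmem : ∀ n, M μ₀ n ∈ stdSimplex ℝ X := fun n => by
    rw [hfl0]; exact mfFlow_mem hp hμ₀ hpol0 n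
  -- iterated shifts of the chosen equilibrium are equilibria
  have hNk : ∀ k, IsMFGNash p r γ (M μ₀ k) (fun n => Pi μ₀ (k + n)) (fun n => M μ₀ (k + n)) := by
    intro k
    induction k with
    | zero =>
      have h0 : M μ₀ 0 = μ₀ := by rw [hfl0]; rfl
      have e1 : (fun n => Pi μ₀ (0 + n)) = Pi μ₀ := by funext n; rw [Nat.zero_add]
      have e2 : (fun n => M μ₀ (0 + n)) = M μ₀ := by funext n; rw [Nat.zero_add]
      rw [h0, e1, e2]
      exact hN μ₀ hμ₀
    | succ k ih =>
      have h := nash_shift hp hr hγ0 hγ1 (hmem k) ih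
      have h' : IsMFGNash p r γ (M μ₀ (k + 1)) (fun j => Pi μ₀ (k + (j + 1)))
          (fun j => M μ₀ (k + (j + 1))) := h
      have e1 : (fun j => Pi μ₀ (k + (j + 1))) = (fun n => Pi μ₀ (k + 1 + n)) := by
        funext j
        have hj : k + (j + 1) = k + 1 + j := by omega
        rw [hj]
      have e2 : (fun j => M μ₀ (k + (j + 1))) = (fun n => M μ₀ (k + 1 + n)) := by
        funext j
        have hj : k + (j + 1) = k + 1 + j := by omega
        rw [hj]
      rw [e1, e2] at h'
      exact h'
  have hMk : ∀ k, (fun n => M μ₀ (k + n)) = M (M μ₀ k) := fun k =>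
    huniq (M μ₀ k) (hmem k) _ _ _ _ (hNk k) (hN (M μ₀ k) (hmem k))
  have hstep : ∀ k, M (M μ₀ k) 1 = M μ₀ (k + 1) := by
    intro k
    rw [← hMk k]
  -- the induced flow equals the chosen equilibrium flow
  have hflow : ∀ n, indFlow p πt μ₀ n = M μ₀ n := by
    intro n
    induction n with
    | zero => show μ₀ = M μ₀ 0; rw [hfl0]; rfl
    | succ n ih =>
      show popStep p (indFlow p πt μ₀ n) (fun x => πt x (indFlow p πt μ₀ n)) = M μ₀ (n + 1)
      rw [ih, ← hstep n, (hN (M μ₀ n) (hmem n)).2.1]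
      show popStep p (M μ₀ n) (fun x => πt x (M μ₀ n)) = popStep p (M μ₀ n) (Pi (M μ₀ n) 0)
      have hfun : (fun x => πt x (M μ₀ n)) = Pi (M μ₀ n) 0 := by
        funext x a
        rw [hπt]
      rw [hfun]
  have hind : indFlow p πt μ₀ = M μ₀ := funext hflow
  have hpolt : IsPolicy (indPolicy p πt μ₀) := by
    intro n x
    show πt x (indFlow p πt μ₀ n) ∈ stdSimplex ℝ A
    rw [hind, hπt]
    exact (hN (M μ₀ n) (hmem n)).1 0 x
  have hfl_ind : indFlow p πt μ₀ = mfFlow p μ₀ (indPolicy p πt μ₀) := by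
    funext n
    induction n with
    | zero => rfl
    | succ n ih =>
      show popStep p (indFlow p πt μ₀ n) (fun x => πt x (indFlow p πt μ₀ n))
          = popStep p (mfFlow p μ₀ (indPolicy p πt μ₀) n) (indPolicy p πt μ₀ n)
      rw [← ih]
      rfl
  have hip : indPolicy p πt μ₀ = fun n => Pi (M μ₀ n) 0 := by
    funext n x a
    show πt x (indFlow p πt μ₀ n) a = Pi (M μ₀ n) 0 x a
    rw [hind, hπt]
  -- Bellman-type one step identity for the equilibrium value
  have hbell : ∀ μ, μ ∈ stdSimplex ℝ X →
      totalReward p r γ μ (Pi μ) (M μ)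
        = (∑ x : X, μ x * ∑ a : A, Pi μ 0 x a * r x a μ)
          + γ * totalReward p r γ (M μ 1) (Pi (M μ 1)) (M (M μ 1)) := by
    intro μ hμ
    obtain ⟨hpolμ, hflμ, hoptμ⟩ := hN μ hμ
    have hmemμ : ∀ n, M μ n ∈ stdSimplex ℝ X := fun n => by
      rw [hflμ]; exact mfFlow_mem hp hμ hpolμ n
    have hsμ := summable_tr hp hr hγ0.le hγ1 hμ hpolμ hmemμ
    have hsh := totalReward_shift p r γ μ (Pi μ) (M μ) hsμ
    rw [marginals_eq_flow hflμ 1] at hsh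
    have h0 : M μ 0 = μ := by rw [hflμ]; rfl
    rw [h0] at hsh
    have hA := nash_shift hp hr hγ0 hγ1 hμ (hN μ hμ)
    have hB := hN (M μ 1) (hmemμ 1)
    have heq : (fun k => M μ (k + 1)) = M (M μ 1) :=
      huniq (M μ 1) (hmemμ 1) _ _ _ _ hA hB
    rw [heq] at hsh hA
    have hval : totalReward p r γ (M μ 1) (fun k => Pi μ (k + 1)) (M (M μ 1))
        = totalReward p r γ (M μ 1) (Pi (M μ 1)) (M (M μ 1)) :=
      le_antisymm (hB.2.2 _ hA.1) (hA.2.2 _ hB.1)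
    rw [hval] at hsh
    exact hsh
  -- the key telescoping identity
  have hclaim : ∀ k, totalReward p r γ μ₀ (Pi μ₀) (M μ₀)
      = (∑ n ∈ Finset.range k, γ ^ n * ∑ x : X, M μ₀ n x *
          ∑ a : A, Pi (M μ₀ n) 0 x a * r x a (M μ₀ n))
        + γ ^ k * totalReward p r γ (M μ₀ k) (Pi (M μ₀ k)) (M (M μ₀ k)) := by
    intro k
    induction k with
    | zero =>
      have h0 : M μ₀ 0 = μ₀ := by rw [hfl0]; rfl
      simp [h0]
    | succ k ih =>
      rw [ih, hbell (M μ₀ k) (hmem k), hstep k, Finset.sum_range_succ]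
      ring
  -- summability and the limit
  have hpol' : IsPolicy (fun n => Pi (M μ₀ n) 0) := fun n x => (hN (M μ₀ n) (hmem n)).1 0 x
  have hflow' : M μ₀ = mfFlow p μ₀ (fun n => Pi (M μ₀ n) 0) := by
    rw [← hip, ← hfl_ind, hind]
  have hmarg' : ∀ n, marginals p μ₀ (fun n => Pi (M μ₀ n) 0) (M μ₀) n = M μ₀ n :=
    marginals_eq_flow hflow'
  have hsum' := summable_tr hp hr hγ0.le hγ1 hμ₀ hpol' hmem
  have hsumf : Summable (fun n : ℕ => γ ^ n * ∑ x : X, M μ₀ n x *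
      ∑ a : A, Pi (M μ₀ n) 0 x a * r x a (M μ₀ n)) := by
    refine hsum'.congr fun n => ?_
    rw [hmarg' n]
  have hTR' : totalReward p r γ μ₀ (fun n => Pi (M μ₀ n) 0) (M μ₀)
      = ∑' n : ℕ, γ ^ n * ∑ x : X, M μ₀ n x *
          ∑ a : A, Pi (M μ₀ n) 0 x a * r x a (M μ₀ n) := by
    unfold totalReward
    exact tsum_congr fun n => by rw [hmarg' n]
  have hB : ∀ k, |totalReward p r γ (M μ₀ k) (Pi (M μ₀ k)) (M (M μ₀ k))| ≤ C * (1 - γ)⁻¹ := by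
    intro k
    have hNk' := hN (M μ₀ k) (hmem k)
    have hmk : ∀ n, M (M μ₀ k) n ∈ stdSimplex ℝ X := fun n => by
      rw [hNk'.2.1]; exact mfFlow_mem hp (hmem k) hNk'.1 n
    exact tr_abs_le hp hr hγ0.le hγ1 (hmem k) hNk'.1 hmk
  have hzero : Filter.Tendsto
      (fun k => γ ^ k * totalReward p r γ (M μ₀ k) (Pi (M μ₀ k)) (M (M μ₀ k)))
      Filter.atTop (nhds 0) := by
    apply squeeze_zero_norm (a := fun k => (C * (1 - γ)⁻¹) * γ ^ k)
    · intro k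
      rw [Real.norm_eq_abs, abs_mul, abs_pow, abs_of_nonneg hγ0.le, mul_comm]
      exact mul_le_mul_of_nonneg_right (hB k) (pow_nonneg hγ0.le k)
    · simpa using (tendsto_pow_atTop_nhds_zero_of_lt_one hγ0.le hγ1).const_mul
        (C * (1 - γ)⁻¹)
  have hlim1 : Filter.Tendsto
      (fun k => ∑ n ∈ Finset.range k, γ ^ n * ∑ x : X, M μ₀ n x *
        ∑ a : A, Pi (M μ₀ n) 0 x a * r x a (M μ₀ n))
      Filter.atTop (nhds (∑' n : ℕ, γ ^ n * ∑ x : X, M μ₀ n x *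
        ∑ a : A, Pi (M μ₀ n) 0 x a * r x a (M μ₀ n))) :=
    hsumf.hasSum.tendsto_sum_nat
  have hlim2 : Filter.Tendsto
      (fun k => ∑ n ∈ Finset.range k, γ ^ n * ∑ x : X, M μ₀ n x *
        ∑ a : A, Pi (M μ₀ n) 0 x a * r x a (M μ₀ n))
      Filter.atTop (nhds (totalReward p r γ μ₀ (Pi μ₀) (M μ₀))) := by
    have he : (fun k => ∑ n ∈ Finset.range k, γ ^ n * ∑ x : X, M μ₀ n x *
        ∑ a : A, Pi (M μ₀ n) 0 x a * r x a (M μ₀ n))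
        = fun k => totalReward p r γ μ₀ (Pi μ₀) (M μ₀)
          - γ ^ k * totalReward p r γ (M μ₀ k) (Pi (M μ₀ k)) (M (M μ₀ k)) := by
      funext k; rw [hclaim k]; ring
    rw [he]
    simpa using Filter.Tendsto.sub (tendsto_const_nhds
      (x := totalReward p r γ μ₀ (Pi μ₀) (M μ₀))) hzero
  have hkey : totalReward p r γ μ₀ (Pi μ₀) (M μ₀)
      = ∑' n : ℕ, γ ^ n * ∑ x : X, M μ₀ n x *
          ∑ a : A, Pi (M μ₀ n) 0 x a * r x a (M μ₀ n) :=
    tendsto_nhds_unique hlim2 hlim1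
  refine ⟨hpolt, hfl_ind, ?_⟩
  intro πs' hπs'
  rw [hind, hip]
  calc totalReward p r γ μ₀ πs' (M μ₀)
      ≤ totalReward p r γ μ₀ (Pi μ₀) (M μ₀) := hopt0 πs' hπs'
    _ = ∑' n : ℕ, γ ^ n * ∑ x : X, M μ₀ n x *
          ∑ a : A, Pi (M μ₀ n) 0 x a * r x a (M μ₀ n) := hkey
    _ = totalReward p r γ μ₀ (fun n => Pi (M μ₀ n) 0) (M μ₀) := hTR'.symm

end MFGAux

/-- If for every initial MF state `μ₀ ∈ Δ_X` there exists an MFG Nash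
equilibrium consistent with `μ₀`, and any two such equilibria have the same MF flow,
then there exists a Master policy: a population-dependent policy whose induced pair from any
`μ₀ ∈ Δ_X` is an MFG Nash equilibrium consistent with `μ₀`. -/
theorem exists_master_policy
    {X A : Type*} [Fintype X] [Nonempty X] [Fintype A] [Nonempty A]
    (p : X → A → (X → ℝ) → X → ℝ) (r : X → A → (X → ℝ) → ℝ) (γ C : ℝ)
    (hp : ∀ x a μ, μ ∈ stdSimplex ℝ X → p x a μ ∈ stdSimplex ℝ X)
    (hr : ∀ x a μ, μ ∈ stdSimplex ℝ X → |r x a μ| ≤ C)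
    (hγ : γ ∈ Set.Ioo (0 : ℝ) 1)
    (hexists : ∀ μ₀ ∈ stdSimplex ℝ X, ∃ (πs : ℕ → X → A → ℝ) (μs : ℕ → X → ℝ),
      IsMFGNash p r γ μ₀ πs μs)
    (huniq : ∀ μ₀ ∈ stdSimplex ℝ X, ∀ (πs πs' : ℕ → X → A → ℝ) (μs μs' : ℕ → X → ℝ),
      IsMFGNash p r γ μ₀ πs μs → IsMFGNash p r γ μ₀ πs' μs' → μs = μs') :
    ∃ πt : X → (X → ℝ) → A → ℝ,
      (∀ x μ, μ ∈ stdSimplex ℝ X → πt x μ ∈ stdSimplex ℝ A) ∧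
      ∀ μ₀ ∈ stdSimplex ℝ X,
        IsMFGNash p r γ μ₀ (indPolicy p πt μ₀) (indFlow p πt μ₀) := by
  classical
  have hex' : ∀ μ : X → ℝ, ∃ (πs : ℕ → X → A → ℝ) (μs : ℕ → X → ℝ),
      μ ∈ stdSimplex ℝ X → IsMFGNash p r γ μ πs μs := by
    intro μ
    by_cases h : μ ∈ stdSimplex ℝ X
    · obtain ⟨πs, μs, hn⟩ := hexists μ h
      exact ⟨πs, μs, fun _ => hn⟩
    · exact ⟨fun _ _ _ => 0, fun _ _ => 0, fun h' => absurd h' h⟩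
  choose Pi M hN using hex'
  refine ⟨fun x μ => Pi μ 0 x, fun x μ hμ => (hN μ hμ).1 0 x, fun μ₀ hμ₀ => ?_⟩
  exact master_aux hp hr hγ.1 hγ.2 Pi M hN huniq _ (fun x μ => rfl) hμ₀
end

section
/- If (𝛑̂, 𝛍̂) is an MFG Nash equilibrium consistent with μ₀, then for every n₀ ≥ 0 the time-shifted pair ((π̂_{n₀+n})_{n≥0}, (𝛍̂_{n₀+n})_{n≥0}) is an MFG Nash equilibrium consistent with 𝛍̂_{n₀}. -/
open scoped BigOperators

section Aux

variable {X A : Type*} [Fintype X] [Fintype A]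

lemma aux_step_mem (p : X → A → (X → ℝ) → X → ℝ)
    (hp : ∀ x a μ, μ ∈ stdSimplex ℝ X → p x a μ ∈ stdSimplex ℝ X)
    {ν μ : X → ℝ} (hν : ν ∈ stdSimplex ℝ X) (hμ : μ ∈ stdSimplex ℝ X)
    {π : X → A → ℝ} (hπ : ∀ x, π x ∈ stdSimplex ℝ A) :
    (fun x => ∑ x' : X, ν x' * ∑ a : A, π x' a * p x' a μ x) ∈ stdSimplex ℝ X := by
  constructor
  · intro x
    exact Finset.sum_nonneg fun x' _ => mul_nonneg (hν.1 x')
      (Finset.sum_nonneg fun a _ => mul_nonneg ((hπ x').1 a) ((hp x' a μ hμ).1 x))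
  · show (∑ x : X, ∑ x' : X, ν x' * ∑ a : A, π x' a * p x' a μ x) = 1
    rw [Finset.sum_comm]
    have key : ∀ x' : X, ∑ x : X, ν x' * ∑ a : A, π x' a * p x' a μ x = ν x' := by
      intro x'
      rw [← Finset.mul_sum]
      have h1 : ∑ x : X, ∑ a : A, π x' a * p x' a μ x = 1 := by
        rw [Finset.sum_comm]
        have h2 : ∀ a : A, ∑ x : X, π x' a * p x' a μ x = π x' a := by
          intro a; rw [← Finset.mul_sum, (hp x' a μ hμ).2, mul_one]
        simp only [h2]; exact (hπ x').2
      rw [h1, mul_one]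
    simp only [key]; exact hν.2

lemma aux_mfFlow_mem (p : X → A → (X → ℝ) → X → ℝ)
    (hp : ∀ x a μ, μ ∈ stdSimplex ℝ X → p x a μ ∈ stdSimplex ℝ X)
    {μ₀ : X → ℝ} (hμ₀ : μ₀ ∈ stdSimplex ℝ X)
    {πs : ℕ → X → A → ℝ} (hπs : IsPolicy πs) :
    ∀ n, mfFlow p μ₀ πs n ∈ stdSimplex ℝ X := by
  intro n
  induction n with
  | zero => exact hμ₀
  | succ n ih => exact aux_step_mem p hp ih ih (hπs n)

lemma aux_marginals_mem (p : X → A → (X → ℝ) → X → ℝ)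
    (hp : ∀ x a μ, μ ∈ stdSimplex ℝ X → p x a μ ∈ stdSimplex ℝ X)
    {μ₀ : X → ℝ} (hμ₀ : μ₀ ∈ stdSimplex ℝ X)
    {πs : ℕ → X → A → ℝ} (hπs : IsPolicy πs)
    {μs : ℕ → X → ℝ} (hμs : ∀ n, μs n ∈ stdSimplex ℝ X) :
    ∀ n, marginals p μ₀ πs μs n ∈ stdSimplex ℝ X := by
  intro n
  induction n with
  | zero => exact hμ₀
  | succ n ih => exact aux_step_mem p hp ih (hμs n) (hπs n)

lemma aux_marginals_congr (p : X → A → (X → ℝ) → X → ℝ) (μ₀ : X → ℝ)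
    {πs πs' : ℕ → X → A → ℝ} (μs : ℕ → X → ℝ) :
    ∀ n, (∀ m, m < n → πs m = πs' m) →
      marginals p μ₀ πs μs n = marginals p μ₀ πs' μs n := by
  intro n
  induction n with
  | zero => intro _; rfl
  | succ n ih =>
      intro h
      show (fun x => ∑ x' : X, marginals p μ₀ πs μs n x' * ∑ a : A, πs n x' a * p x' a (μs n) x)
        = (fun x => ∑ x' : X, marginals p μ₀ πs' μs n x' * ∑ a : A, πs' n x' a * p x' a (μs n) x)
      rw [ih (fun m hm => h m (hm.trans (Nat.lt_succ_self n))), h n (Nat.lt_succ_self n)]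

lemma aux_marginals_eq_flow (p : X → A → (X → ℝ) → X → ℝ) (μ₀ : X → ℝ)
    (πs : ℕ → X → A → ℝ) {μs : ℕ → X → ℝ} (hμs : μs = mfFlow p μ₀ πs) :
    ∀ n, marginals p μ₀ πs μs n = μs n := by
  intro n
  induction n with
  | zero => rw [hμs]; rfl
  | succ n ih =>
      show (fun x => ∑ x' : X, marginals p μ₀ πs μs n x' * ∑ a : A, πs n x' a * p x' a (μs n) x)
        = μs (n + 1)
      rw [ih, hμs]
      rfl

lemma aux_reward_bound {C : ℝ} (r : X → A → (X → ℝ) → ℝ)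
    (hr : ∀ x a μ, μ ∈ stdSimplex ℝ X → |r x a μ| ≤ C)
    {ν μ : X → ℝ} (hν : ν ∈ stdSimplex ℝ X) (hμ : μ ∈ stdSimplex ℝ X)
    {π : X → A → ℝ} (hπ : ∀ x, π x ∈ stdSimplex ℝ A) :
    |∑ x : X, ν x * ∑ a : A, π x a * r x a μ| ≤ C := by
  calc |∑ x : X, ν x * ∑ a : A, π x a * r x a μ|
      ≤ ∑ x : X, |ν x * ∑ a : A, π x a * r x a μ| := Finset.abs_sum_le_sum_abs _ _
    _ ≤ ∑ x : X, ν x * C := by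
        apply Finset.sum_le_sum
        intro x _
        rw [abs_mul, abs_of_nonneg (hν.1 x)]
        apply mul_le_mul_of_nonneg_left _ (hν.1 x)
        calc |∑ a : A, π x a * r x a μ| ≤ ∑ a : A, |π x a * r x a μ| :=
              Finset.abs_sum_le_sum_abs _ _
          _ ≤ ∑ a : A, π x a * C := by
              apply Finset.sum_le_sum
              intro a _
              rw [abs_mul, abs_of_nonneg ((hπ x).1 a)]
              exact mul_le_mul_of_nonneg_left (hr x a μ hμ) ((hπ x).1 a)
          _ = C := by rw [← Finset.sum_mul, (hπ x).2, one_mul]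
    _ = C := by rw [← Finset.sum_mul, hν.2, one_mul]

lemma aux_summable {C γ : ℝ} (hγ : γ ∈ Set.Ioo (0 : ℝ) 1)
    {g : ℕ → ℝ} (hg : ∀ n, |g n| ≤ C) :
    Summable (fun n => γ ^ n * g n) := by
  apply Summable.of_norm_bounded
    ((summable_geometric_of_lt_one hγ.1.le hγ.2).mul_left C)
  intro n
  rw [Real.norm_eq_abs, abs_mul, abs_pow, abs_of_pos hγ.1, mul_comm]
  exact mul_le_mul_of_nonneg_right (hg n) (pow_nonneg hγ.1.le n)

end Aux

section Aux2

variable {X A : Type*} [Fintype X] [Fintype A]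

lemma aux_decomp (p : X → A → (X → ℝ) → X → ℝ) (r : X → A → (X → ℝ) → ℝ) (γ C : ℝ)
    (hp : ∀ x a μ, μ ∈ stdSimplex ℝ X → p x a μ ∈ stdSimplex ℝ X)
    (hr : ∀ x a μ, μ ∈ stdSimplex ℝ X → |r x a μ| ≤ C)
    (hγ : γ ∈ Set.Ioo (0 : ℝ) 1)
    (μ₀ : X → ℝ) (hμ₀ : μ₀ ∈ stdSimplex ℝ X)
    (πhat : ℕ → X → A → ℝ) (hπhat : IsPolicy πhat)
    (μhat : ℕ → X → ℝ) (hflow : μhat = mfFlow p μ₀ πhat)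
    (n₀ : ℕ) (πs' : ℕ → X → A → ℝ) (hπs' : IsPolicy πs') :
    totalReward p r γ μ₀ (fun n => if n < n₀ then πhat n else πs' (n - n₀)) μhat
      = (∑ n ∈ Finset.range n₀,
          γ ^ n * ∑ x : X, μhat n x * ∑ a : A, πhat n x a * r x a (μhat n))
        + γ ^ n₀ * totalReward p r γ (μhat n₀) πs' (fun n => μhat (n₀ + n)) := by
  set πc : ℕ → X → A → ℝ := fun n => if n < n₀ then πhat n else πs' (n - n₀) with hπcdef
  have hμmem : ∀ n, μhat n ∈ stdSimplex ℝ X := by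
    intro n; rw [hflow]; exact aux_mfFlow_mem p hp hμ₀ hπhat n
  have hπc : IsPolicy πc := by
    intro n x
    show (if n < n₀ then πhat n else πs' (n - n₀)) x ∈ stdSimplex ℝ A
    split
    · exact hπhat n x
    · exact hπs' (n - n₀) x
  have hπclt : ∀ m, m < n₀ → πc m = πhat m := by
    intro m hm; show (if m < n₀ then πhat m else πs' (m - n₀)) = πhat m
    rw [if_pos hm]
  have hπcge : ∀ k, πc (n₀ + k) = πs' k := by
    intro k; show (if n₀ + k < n₀ then πhat (n₀ + k) else πs' (n₀ + k - n₀)) = πs' k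
    rw [if_neg (Nat.not_lt.mpr (Nat.le_add_right n₀ k)), Nat.add_sub_cancel_left]
  have hνmem : ∀ n, marginals p μ₀ πc μhat n ∈ stdSimplex ℝ X :=
    aux_marginals_mem p hp hμ₀ hπc hμmem
  have hhead : ∀ n, n ≤ n₀ → marginals p μ₀ πc μhat n = μhat n := by
    intro n hn
    rw [aux_marginals_congr p μ₀ μhat n (fun m hm => hπclt m (lt_of_lt_of_le hm hn)),
      aux_marginals_eq_flow p μ₀ πhat hflow n]
  have htail : ∀ k, marginals p μ₀ πc μhat (n₀ + k)
      = marginals p (μhat n₀) πs' (fun n => μhat (n₀ + n)) k := by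
    intro k
    induction k with
    | zero => exact hhead n₀ le_rfl
    | succ k ih =>
        show (fun x => ∑ x' : X, marginals p μ₀ πc μhat (n₀ + k) x'
            * ∑ a : A, πc (n₀ + k) x' a * p x' a (μhat (n₀ + k)) x)
          = (fun x => ∑ x' : X, marginals p (μhat n₀) πs' (fun n => μhat (n₀ + n)) k x'
            * ∑ a : A, πs' k x' a * p x' a (μhat (n₀ + k)) x)
        rw [ih, hπcge k]
  have hsum : Summable (fun n => γ ^ n
      * ∑ x : X, marginals p μ₀ πc μhat n x * ∑ a : A, πc n x a * r x a (μhat n)) :=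
    aux_summable hγ (fun n => aux_reward_bound r hr (hνmem n) (hμmem n) (hπc n))
  show (∑' n : ℕ, γ ^ n
      * ∑ x : X, marginals p μ₀ πc μhat n x * ∑ a : A, πc n x a * r x a (μhat n)) = _
  rw [← Summable.sum_add_tsum_nat_add n₀ hsum]
  congr 1
  · apply Finset.sum_congr rfl
    intro n hn
    have hn' : n < n₀ := Finset.mem_range.mp hn
    rw [hhead n hn'.le, hπclt n hn']
  · have hterm : ∀ i : ℕ, γ ^ (i + n₀)
        * ∑ x : X, marginals p μ₀ πc μhat (i + n₀) x
          * ∑ a : A, πc (i + n₀) x a * r x a (μhat (i + n₀))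
        = γ ^ n₀ * (γ ^ i
          * ∑ x : X, marginals p (μhat n₀) πs' (fun n => μhat (n₀ + n)) i x
            * ∑ a : A, πs' i x a * r x a (μhat (n₀ + i))) := by
      intro i
      rw [add_comm i n₀, htail i, hπcge i, pow_add]
      ring
    rw [tsum_congr hterm, tsum_mul_left]
    rfl

end Aux2

/-- If `(π̂, μ̂)` is an MFG Nash equilibrium consistent with `μ₀`, then for every
`n₀ ≥ 0` the time-shifted pair `((π̂_{n₀+n})_n, (μ̂_{n₀+n})_n)` is an MFG Nash equilibrium
consistent with `μ̂_{n₀}`. -/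
theorem mfgNash_time_shift
    {X A : Type*} [Fintype X] [Nonempty X] [Fintype A] [Nonempty A]
    (p : X → A → (X → ℝ) → X → ℝ) (r : X → A → (X → ℝ) → ℝ) (γ C : ℝ)
    (hp : ∀ x a μ, μ ∈ stdSimplex ℝ X → p x a μ ∈ stdSimplex ℝ X)
    (hr : ∀ x a μ, μ ∈ stdSimplex ℝ X → |r x a μ| ≤ C)
    (hγ : γ ∈ Set.Ioo (0 : ℝ) 1)
    (μ₀ : X → ℝ) (hμ₀ : μ₀ ∈ stdSimplex ℝ X)
    (πhat : ℕ → X → A → ℝ) (μhat : ℕ → X → ℝ)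
    (hNash : IsMFGNash p r γ μ₀ πhat μhat) :
    ∀ n₀ : ℕ,
      IsMFGNash p r γ (μhat n₀) (fun n => πhat (n₀ + n)) (fun n => μhat (n₀ + n)) := by
  obtain ⟨hπhat, hflow, hopt⟩ := hNash
  intro n₀
  have hshiftpol : IsPolicy (fun n => πhat (n₀ + n)) := fun n x => hπhat (n₀ + n) x
  have hshiftflow : (fun n => μhat (n₀ + n))
      = mfFlow p (μhat n₀) (fun n => πhat (n₀ + n)) := by
    funext n
    induction n with
    | zero => rfl
    | succ n ih =>
        show μhat (n₀ + n + 1)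
          = popStep p (mfFlow p (μhat n₀) (fun n => πhat (n₀ + n)) n) (πhat (n₀ + n))
        rw [← ih]
        rw [hflow]
        rfl
  refine ⟨hshiftpol, hshiftflow, ?_⟩
  intro πs' hπs'
  have h1 := aux_decomp p r γ C hp hr hγ μ₀ hμ₀ πhat hπhat μhat hflow n₀ πs' hπs'
  have h2 := aux_decomp p r γ C hp hr hγ μ₀ hμ₀ πhat hπhat μhat hflow n₀
    (fun n => πhat (n₀ + n)) hshiftpol
  have hconcat : (fun n => if n < n₀ then πhat n else πhat (n₀ + (n - n₀))) = πhat := by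
    funext n
    split
    · rfl
    · rename_i h
      have hn : n₀ + (n - n₀) = n := by omega
      rw [hn]
  rw [hconcat] at h2
  have hπc : IsPolicy (fun n => if n < n₀ then πhat n else πs' (n - n₀)) := by
    intro n x
    show (if n < n₀ then πhat n else πs' (n - n₀)) x ∈ stdSimplex ℝ A
    split
    · exact hπhat n x
    · exact hπs' (n - n₀) x
  have hle := hopt _ hπc
  rw [h1, h2] at hle
  have hγpow : (0 : ℝ) < γ ^ n₀ := pow_pos hγ.1 n₀
  have := le_of_add_le_add_left hle
  exact (mul_le_mul_iff_right₀ hγpow).mp this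
end

section
/- Let μ₀ ∈ Δ_X, K ≥ 1, and let π̃_1,…,π̃_K : X × Δ_X → Δ_A be population-dependent policies. Define K subpopulation flows by μ_{k,0} = μ₀, the averaged flow μ̄_{K,n} = (1/K) Σ_{k=1}^K μ_{k,n}, and μ_{k,n+1}(x) = Σ_{x'} μ_{k,n}(x') Σ_a π̃_k(a|x',μ̄_{K,n}) p(x|x',a,μ̄_{K,n}). Then there exists a population-agnostic policy 𝛑̄ = (π̄_n)_{n≥0} such that, for every x' with μ̄_{K,n}(x') > 0, π̄_n(a|x') = (1/K) Σ_{k=1}^K (μ_{k,n}(x') / μ̄_{K,n}(x')) π̃_k(a|x',μ̄_{K,n}), and for every n ≥ 0 and x ∈ X the averaged flow evolves according to 𝛑̄: μ̄_{K,n+1}(x) = Σ_{x'} μ̄_{K,n}(x') Σ_a π̄_n(a|x') p(x|x',a,μ̄_{K,n}). -/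
open scoped BigOperators

section MixtureDefs

variable {X A : Type*} [Fintype X] [Fintype A]

/-- Average of `K` subpopulation MF states: `μ̄(x) = (1/K) ∑_k ν_k(x)`. -/
noncomputable def avgOf {K : ℕ} (ν : Fin K → X → ℝ) : X → ℝ := fun x => (1 / (K : ℝ)) * ∑ k : Fin K, ν k x

/-- The `K` subpopulation flows: `μ_{k,0} = μ₀` and
`μ_{k,n+1}(x) = ∑_{x'} μ_{k,n}(x') ∑_a π̃_k(a|x',μ̄_{K,n}) p(x|x',a,μ̄_{K,n})`,
where `μ̄_{K,n}` is the average of the `K` flows at time `n`. -/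
noncomputable def subFlows (p : X → A → (X → ℝ) → X → ℝ) {K : ℕ} (πt : Fin K → X → (X → ℝ) → A → ℝ)
    (μ₀ : X → ℝ) : ℕ → Fin K → X → ℝ
  | 0 => fun _ => μ₀
  | n + 1 => fun k x =>
      ∑ x' : X, subFlows p πt μ₀ n k x' *
        ∑ a : A, πt k x' (avgOf (subFlows p πt μ₀ n)) a *
          p x' a (avgOf (subFlows p πt μ₀ n)) x

end MixtureDefs

/-- Given `μ₀ ∈ Δ_X`, `K ≥ 1` population-dependent policies `π̃_1,…,π̃_K`,
and the `K` subpopulation flows with averaged flow `μ̄_{K,n}`, there exists a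
population-agnostic policy `𝛑̄` such that on states charged by `μ̄_{K,n}` it equals the
weighted mixture `(1/K) ∑_k (μ_{k,n}(x')/μ̄_{K,n}(x')) π̃_k(a|x',μ̄_{K,n})`, and the averaged
flow evolves according to `𝛑̄`. -/
theorem exists_averaged_policy
    {X A : Type*} [Fintype X] [Nonempty X] [Fintype A] [Nonempty A]
    (p : X → A → (X → ℝ) → X → ℝ)
    (hp : ∀ x a μ, μ ∈ stdSimplex ℝ X → p x a μ ∈ stdSimplex ℝ X)
    (μ₀ : X → ℝ) (hμ₀ : μ₀ ∈ stdSimplex ℝ X)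
    (K : ℕ) (hK : 1 ≤ K)
    (πt : Fin K → X → (X → ℝ) → A → ℝ)
    (hπt : ∀ k x μ, μ ∈ stdSimplex ℝ X → πt k x μ ∈ stdSimplex ℝ A) :
    ∃ πbar : ℕ → X → A → ℝ, IsPolicy πbar ∧
      (∀ (n : ℕ) (x' : X), 0 < avgOf (subFlows p πt μ₀ n) x' → ∀ a : A,
        πbar n x' a = (1 / (K : ℝ)) * ∑ k : Fin K,
          (subFlows p πt μ₀ n k x' / avgOf (subFlows p πt μ₀ n) x') *
            πt k x' (avgOf (subFlows p πt μ₀ n)) a) ∧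
      (∀ (n : ℕ) (x : X),
        avgOf (subFlows p πt μ₀ (n + 1)) x =
          ∑ x' : X, avgOf (subFlows p πt μ₀ n) x' *
            ∑ a : A, πbar n x' a * p x' a (avgOf (subFlows p πt μ₀ n)) x) := by

  classical
  have hK0 : (K : ℝ) ≠ 0 := Nat.cast_ne_zero.mpr (by omega)
  -- average of simplex elements is in the simplex
  have havg : ∀ ν : Fin K → X → ℝ, (∀ k, ν k ∈ stdSimplex ℝ X) → avgOf ν ∈ stdSimplex ℝ X := by
    intro ν hν
    constructor
    · intro x
      have h1 : (0:ℝ) ≤ ∑ k : Fin K, ν k x := Finset.sum_nonneg fun k _ => (hν k).1 x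
      have : (0:ℝ) ≤ 1 / (K:ℝ) := by positivity
      exact mul_nonneg this h1
    · show (∑ x : X, (1 / (K:ℝ)) * ∑ k : Fin K, ν k x) = 1
      rw [← Finset.mul_sum, Finset.sum_comm]
      have : ∀ k ∈ (Finset.univ : Finset (Fin K)), (∑ x : X, ν k x) = 1 :=
        fun k _ => (hν k).2
      rw [Finset.sum_congr rfl this]
      simp [hK0]
  -- each subflow is in the simplex
  have hsub : ∀ n k, subFlows p πt μ₀ n k ∈ stdSimplex ℝ X := by
    intro n
    induction n with
    | zero => intro k; exact hμ₀
    | succ n ih =>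
      intro k
      have hav : avgOf (subFlows p πt μ₀ n) ∈ stdSimplex ℝ X := havg _ ih
      constructor
      · intro x
        refine Finset.sum_nonneg fun x' _ => mul_nonneg ((ih k).1 x')
          (Finset.sum_nonneg fun a _ => mul_nonneg ((hπt k x' _ hav).1 a)
            ((hp x' a _ hav).1 x))
      · show (∑ x : X, ∑ x' : X, subFlows p πt μ₀ n k x' *
            ∑ a : A, πt k x' (avgOf (subFlows p πt μ₀ n)) a *
              p x' a (avgOf (subFlows p πt μ₀ n)) x) = 1
        rw [Finset.sum_comm]
        have : ∀ x' ∈ (Finset.univ : Finset X),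
            (∑ x : X, subFlows p πt μ₀ n k x' *
              ∑ a : A, πt k x' (avgOf (subFlows p πt μ₀ n)) a *
                p x' a (avgOf (subFlows p πt μ₀ n)) x)
            = subFlows p πt μ₀ n k x' := by
          intro x' _
          rw [← Finset.mul_sum, Finset.sum_comm]
          have h2 : ∀ a ∈ (Finset.univ : Finset A),
              (∑ x : X, πt k x' (avgOf (subFlows p πt μ₀ n)) a *
                p x' a (avgOf (subFlows p πt μ₀ n)) x)
              = πt k x' (avgOf (subFlows p πt μ₀ n)) a := by
            intro a _
            rw [← Finset.mul_sum, (hp x' a _ hav).2, mul_one]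
          rw [Finset.sum_congr rfl h2, (hπt k x' _ hav).2, mul_one]
        rw [Finset.sum_congr rfl this, (ih k).2]
  set μb := fun n => avgOf (subFlows p πt μ₀ n) with hμb
  have hμbmem : ∀ n, μb n ∈ stdSimplex ℝ X := fun n => havg _ (hsub n)
  -- define the averaged policy
  set πbar : ℕ → X → A → ℝ := fun n x' a =>
    if 0 < μb n x' then
      (1 / (K : ℝ)) * ∑ k : Fin K,
        (subFlows p πt μ₀ n k x' / μb n x') * πt k x' (μb n) a
    else (Fintype.card A : ℝ)⁻¹ with hπbar
  have hA0 : (0:ℝ) < (Fintype.card A : ℝ) := by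
    have := Fintype.card_pos (α := A); exact_mod_cast this
  -- if μb n x' = 0 then every subflow is 0 at x'
  have hzero : ∀ n x', μb n x' = 0 → ∀ k, subFlows p πt μ₀ n k x' = 0 := by
    intro n x' h0 k
    have hsum : (∑ j : Fin K, subFlows p πt μ₀ n j x') = 0 := by
      have : (1 / (K:ℝ)) * ∑ j : Fin K, subFlows p πt μ₀ n j x' = 0 := h0
      field_simp at this
      rwa [mul_zero] at this
    exact (Finset.sum_eq_zero_iff_of_nonneg
      (fun j _ => (hsub n j).1 x')).mp hsum k (Finset.mem_univ k)
  refine ⟨πbar, ?_, ?_, ?_⟩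
  · -- IsPolicy
    intro n x'
    by_cases h : 0 < μb n x'
    · constructor
      · intro a
        simp only [hπbar, if_pos h]
        refine mul_nonneg (by positivity) (Finset.sum_nonneg fun k _ => ?_)
        exact mul_nonneg (div_nonneg ((hsub n k).1 x') h.le)
          (((hπt k x' _ (hμbmem n)).1 a))
      · show (∑ a : A, πbar n x' a) = 1
        simp only [hπbar, if_pos h]
        rw [← Finset.mul_sum, Finset.sum_comm]
        have : ∀ k ∈ (Finset.univ : Finset (Fin K)),
            (∑ a : A, subFlows p πt μ₀ n k x' / μb n x' * πt k x' (μb n) a)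
            = subFlows p πt μ₀ n k x' / μb n x' := by
          intro k _
          rw [← Finset.mul_sum, (hπt k x' _ (hμbmem n)).2, mul_one]
        rw [Finset.sum_congr rfl this]
        have : (∑ k : Fin K, subFlows p πt μ₀ n k x' / μb n x')
            = (∑ k : Fin K, subFlows p πt μ₀ n k x') / μb n x' := by
          rw [Finset.sum_div]
        rw [this]
        have hμval : μb n x' = (1 / (K:ℝ)) * ∑ k : Fin K, subFlows p πt μ₀ n k x' := rfl
        have hsne : (∑ k : Fin K, subFlows p πt μ₀ n k x') ≠ 0 := by
          intro h0
          rw [hμval, h0, mul_zero] at h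
          exact lt_irrefl 0 h
        rw [hμval]
        field_simp
    · constructor
      · intro a; simp only [hπbar, if_neg h]; positivity
      · show (∑ a : A, πbar n x' a) = 1
        simp only [hπbar, if_neg h]
        rw [Finset.sum_const, Finset.card_univ, nsmul_eq_mul]
        field_simp
  · -- mixture formula on charged states
    intro n x' h a
    exact if_pos (show 0 < μb n x' from h)
  · -- flow equation
    intro n x
    show μb (n+1) x = ∑ x' : X, μb n x' * ∑ a : A, πbar n x' a * p x' a (μb n) x
    have lhs : μb (n+1) x = (1 / (K:ℝ)) * ∑ k : Fin K, ∑ x' : X,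
        subFlows p πt μ₀ n k x' * ∑ a : A, πt k x' (μb n) a * p x' a (μb n) x := rfl
    rw [lhs]
    rw [Finset.sum_comm, Finset.mul_sum]
    refine Finset.sum_congr rfl fun x' _ => ?_
    by_cases h : 0 < μb n x'
    · simp only [hπbar, if_pos h]
      have hne : μb n x' ≠ 0 := ne_of_gt h
      calc (1 / (K:ℝ) * ∑ k : Fin K,
              subFlows p πt μ₀ n k x' * ∑ a : A, πt k x' (μb n) a * p x' a (μb n) x)
          = ∑ k : Fin K, ∑ a : A, 1 / (K:ℝ) *
              (subFlows p πt μ₀ n k x' * (πt k x' (μb n) a * p x' a (μb n) x)) := by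
            rw [Finset.mul_sum]
            refine Finset.sum_congr rfl fun k _ => ?_
            rw [Finset.mul_sum, Finset.mul_sum]
        _ = ∑ a : A, ∑ k : Fin K, 1 / (K:ℝ) *
              (subFlows p πt μ₀ n k x' * (πt k x' (μb n) a * p x' a (μb n) x)) :=
            Finset.sum_comm
        _ = ∑ a : A, μb n x' *
              ((1 / (K:ℝ) * ∑ k : Fin K,
                subFlows p πt μ₀ n k x' / μb n x' * πt k x' (μb n) a) * p x' a (μb n) x) := by
            refine Finset.sum_congr rfl fun a _ => ?_
            have hS : μb n x' * (∑ k : Fin K,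
                subFlows p πt μ₀ n k x' / μb n x' * πt k x' (μb n) a)
                = ∑ k : Fin K, subFlows p πt μ₀ n k x' * πt k x' (μb n) a := by
              rw [Finset.mul_sum]
              refine Finset.sum_congr rfl fun k _ => ?_
              field_simp
            calc (∑ k : Fin K, 1 / (K:ℝ) *
                    (subFlows p πt μ₀ n k x' * (πt k x' (μb n) a * p x' a (μb n) x)))
                = 1 / (K:ℝ) * (∑ k : Fin K,
                    subFlows p πt μ₀ n k x' * πt k x' (μb n) a) * p x' a (μb n) x := by
                  rw [Finset.mul_sum, Finset.sum_mul]
                  exact Finset.sum_congr rfl fun k _ => by ring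
              _ = 1 / (K:ℝ) * (μb n x' * (∑ k : Fin K,
                    subFlows p πt μ₀ n k x' / μb n x' * πt k x' (μb n) a)) * p x' a (μb n) x := by
                  rw [hS]
              _ = μb n x' * ((1 / (K:ℝ) * ∑ k : Fin K,
                    subFlows p πt μ₀ n k x' / μb n x' * πt k x' (μb n) a) * p x' a (μb n) x) := by
                  ring
        _ = μb n x' * ∑ a : A,
              (1 / (K:ℝ) * ∑ k : Fin K,
                subFlows p πt μ₀ n k x' / μb n x' * πt k x' (μb n) a) * p x' a (μb n) x := by
            rw [Finset.mul_sum]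
    · have h0 : μb n x' = 0 := le_antisymm (not_lt.mp h) ((hμbmem n).1 x')
      rw [h0, zero_mul]
      rw [Finset.sum_congr rfl (fun k _ => by rw [hzero n x' h0 k, zero_mul])]
      simp
end

section
/- Assume that the reward is separable, r(x,a,μ) = r_A(x,a) + r_M(x,μ), that the transition kernel does not depend on the population, p(x'|x,a,μ) = p(x'|x,a), and that r_M is strictly monotone: Σ_{x∈X} (μ(x)−μ'(x))(r_M(x,μ)−r_M(x,μ')) < 0 for all μ ≠ μ' in Δ_X. Then for every μ₀ ∈ Δ_X, any two MFG Nash equilibria consistent with μ₀ have the same mean-field flow: if (𝛑,𝛍) and (𝛑',𝛍') are both MFG-NE consistent with μ₀ then 𝛍_n = 𝛍'_n for all n ≥ 0. -/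
open scoped BigOperators

/-!
Because the kernel ignores the population, the state marginals of a policy do not depend on the
flow it is played against, and by separability the action part of the reward is the same against
any flow. Adding the two Nash inequalities (each equilibrium policy beats the other one against
its own flow) therefore leaves `∑ₙ γⁿ ∑ₓ (μₙ x - μ'ₙ x) (r_M(x, μₙ) - r_M(x, μ'ₙ)) ≥ 0`, while
strict monotonicity makes every term nonpositive and negative wherever `μₙ ≠ μ'ₙ`.
-/

open Finset

section MFGUniqueness

variable {X A : Type*} [Fintype X] [Fintype A]

def stageReward (r : X → A → (X → ℝ) → ℝ) (π : X → A → ℝ) (ν μ : X → ℝ) : ℝ :=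
  ∑ x, ν x * ∑ a, π x a * r x a μ

lemma popStep_mem_stdSimplex {p : X → A → (X → ℝ) → X → ℝ} {μ : X → ℝ} {π : X → A → ℝ}
    (hμ : μ ∈ stdSimplex ℝ X) (hπ : ∀ x, π x ∈ stdSimplex ℝ A)
    (hp : ∀ x a, p x a μ ∈ stdSimplex ℝ X) : popStep p μ π ∈ stdSimplex ℝ X := by
  refine ⟨fun x => sum_nonneg fun x' _ => mul_nonneg (hμ.1 x')
    (sum_nonneg fun a _ => mul_nonneg ((hπ x').1 a) ((hp x' a).1 x)), ?_⟩
  calc ∑ x, popStep p μ π x = ∑ x', μ x' * ∑ a, π x' a * ∑ x, p x' a μ x := by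
        simp only [popStep, mul_sum]
        rw [sum_comm]
        exact sum_congr rfl fun x' _ => sum_comm
    _ = 1 := by simp only [(hp _ _).2, mul_one, (hπ _).2, hμ.2]

lemma mfFlow_mem_stdSimplex {p : X → A → (X → ℝ) → X → ℝ} {μ₀ : X → ℝ} {πs : ℕ → X → A → ℝ}
    (hp : ∀ x a μ, μ ∈ stdSimplex ℝ X → p x a μ ∈ stdSimplex ℝ X)
    (hμ₀ : μ₀ ∈ stdSimplex ℝ X) (hπ : IsPolicy πs) (n : ℕ) :
    mfFlow p μ₀ πs n ∈ stdSimplex ℝ X := by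
  induction n with
  | zero => exact hμ₀
  | succ n ih => exact popStep_mem_stdSimplex ih (hπ n) fun x a => hp x a _ ih

lemma marginals_eq_mfFlow {p : X → A → (X → ℝ) → X → ℝ}
    (hp_ind : ∀ x a (μ μ' : X → ℝ), p x a μ = p x a μ')
    (μ₀ : X → ℝ) (πs : ℕ → X → A → ℝ) (μs : ℕ → X → ℝ) (n : ℕ) :
    marginals p μ₀ πs μs n = mfFlow p μ₀ πs n := by
  induction n with
  | zero => rfl
  | succ n ih =>
    funext x
    simp only [marginals, mfFlow, popStep, ih, hp_ind _ _ (μs n) (mfFlow p μ₀ πs n)]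

lemma totalReward_eq_tsum_stageReward {p : X → A → (X → ℝ) → X → ℝ}
    (hp_ind : ∀ x a (μ μ' : X → ℝ), p x a μ = p x a μ')
    (r : X → A → (X → ℝ) → ℝ) (γ : ℝ) (μ₀ : X → ℝ) (πs : ℕ → X → A → ℝ) (μs : ℕ → X → ℝ) :
    totalReward p r γ μ₀ πs μs = ∑' n, γ ^ n * stageReward r (πs n) (mfFlow p μ₀ πs n) (μs n) := by
  simp only [totalReward, stageReward, marginals_eq_mfFlow hp_ind]

lemma abs_sum_mul_le_of_mem_stdSimplex {ι : Type*} [Fintype ι] {w f : ι → ℝ} {C : ℝ}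
    (hw : w ∈ stdSimplex ℝ ι) (hf : ∀ i, |f i| ≤ C) : |∑ i, w i * f i| ≤ C :=
  calc |∑ i, w i * f i| ≤ ∑ i, |w i * f i| := abs_sum_le_sum_abs _ _
    _ ≤ ∑ i, w i * C := sum_le_sum fun i _ => by
        rw [abs_mul, abs_of_nonneg (hw.1 i)]
        exact mul_le_mul_of_nonneg_left (hf i) (hw.1 i)
    _ = C := by rw [← sum_mul, hw.2, one_mul]

lemma abs_stageReward_le {r : X → A → (X → ℝ) → ℝ} {π : X → A → ℝ} {ν μ : X → ℝ} {C : ℝ}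
    (hν : ν ∈ stdSimplex ℝ X) (hπ : ∀ x, π x ∈ stdSimplex ℝ A) (hr : ∀ x a, |r x a μ| ≤ C) :
    |stageReward r π ν μ| ≤ C :=
  abs_sum_mul_le_of_mem_stdSimplex hν fun x => abs_sum_mul_le_of_mem_stdSimplex (hπ x) (hr x)

lemma summable_discounted_stageReward {r : X → A → (X → ℝ) → ℝ} {πs : ℕ → X → A → ℝ}
    {νs μs : ℕ → X → ℝ} {γ C : ℝ} (hγ0 : 0 ≤ γ) (hγ1 : γ < 1)
    (hν : ∀ n, νs n ∈ stdSimplex ℝ X) (hπ : IsPolicy πs) (hr : ∀ n x a, |r x a (μs n)| ≤ C) :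
    Summable fun n => γ ^ n * stageReward r (πs n) (νs n) (μs n) := by
  refine .of_norm_bounded ((summable_geometric_of_lt_one hγ0 hγ1).mul_left C) fun n => ?_
  rw [Real.norm_eq_abs, abs_mul, abs_of_nonneg (pow_nonneg hγ0 n), mul_comm]
  exact mul_le_mul_of_nonneg_right (abs_stageReward_le (hν n) (hπ n) (hr n)) (pow_nonneg hγ0 n)

lemma hasSum_totalReward {p : X → A → (X → ℝ) → X → ℝ} {r : X → A → (X → ℝ) → ℝ}
    {γ C : ℝ} {μ₀ : X → ℝ} {πs : ℕ → X → A → ℝ} {μs : ℕ → X → ℝ}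
    (hp : ∀ x a μ, μ ∈ stdSimplex ℝ X → p x a μ ∈ stdSimplex ℝ X)
    (hp_ind : ∀ x a (μ μ' : X → ℝ), p x a μ = p x a μ')
    (hr : ∀ x a μ, μ ∈ stdSimplex ℝ X → |r x a μ| ≤ C) (hγ0 : 0 ≤ γ) (hγ1 : γ < 1)
    (hμ₀ : μ₀ ∈ stdSimplex ℝ X) (hπ : IsPolicy πs) (hμs : ∀ n, μs n ∈ stdSimplex ℝ X) :
    HasSum (fun n => γ ^ n * stageReward r (πs n) (mfFlow p μ₀ πs n) (μs n))
      (totalReward p r γ μ₀ πs μs) := by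
  rw [totalReward_eq_tsum_stageReward hp_ind]
  exact (summable_discounted_stageReward hγ0 hγ1 (mfFlow_mem_stdSimplex hp hμ₀ hπ) hπ
    fun n x a => hr x a _ (hμs n)).hasSum

lemma stageReward_of_separable {r : X → A → (X → ℝ) → ℝ} {rA : X → A → ℝ}
    {rM : X → (X → ℝ) → ℝ} (hsep : ∀ x a μ, r x a μ = rA x a + rM x μ) {π : X → A → ℝ}
    (hπ : ∀ x, ∑ a, π x a = 1) (ν μ : X → ℝ) :
    stageReward r π ν μ = ∑ x, ν x * ∑ a, π x a * rA x a + ∑ x, ν x * rM x μ := by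
  rw [stageReward, ← sum_add_distrib]
  refine sum_congr rfl fun x _ => ?_
  simp only [hsep, mul_add, sum_add_distrib, ← sum_mul, hπ, one_mul]

lemma stageReward_exploitability_of_separable {r : X → A → (X → ℝ) → ℝ} {rA : X → A → ℝ}
    {rM : X → (X → ℝ) → ℝ} (hsep : ∀ x a μ, r x a μ = rA x a + rM x μ) {π π' : X → A → ℝ}
    (hπ : ∀ x, ∑ a, π x a = 1) (hπ' : ∀ x, ∑ a, π' x a = 1) (ν ν' μ μ' : X → ℝ) :
    stageReward r π ν μ - stageReward r π' ν' μ + (stageReward r π' ν' μ' - stageReward r π ν μ')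
      = ∑ x, (ν x - ν' x) * (rM x μ - rM x μ') := by
  simp only [stageReward_of_separable hsep hπ, stageReward_of_separable hsep hπ', mul_sub,
    sub_mul, sum_sub_distrib]
  ring

lemma hasSum_totalReward_exploitability {p : X → A → (X → ℝ) → X → ℝ}
    {r : X → A → (X → ℝ) → ℝ} {rA : X → A → ℝ} {rM : X → (X → ℝ) → ℝ} {γ C : ℝ} {μ₀ : X → ℝ}
    {πs πs' : ℕ → X → A → ℝ} {μs μs' : ℕ → X → ℝ}
    (hp : ∀ x a μ, μ ∈ stdSimplex ℝ X → p x a μ ∈ stdSimplex ℝ X)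
    (hp_ind : ∀ x a (μ μ' : X → ℝ), p x a μ = p x a μ')
    (hsep : ∀ x a μ, r x a μ = rA x a + rM x μ)
    (hr : ∀ x a μ, μ ∈ stdSimplex ℝ X → |r x a μ| ≤ C) (hγ0 : 0 ≤ γ) (hγ1 : γ < 1)
    (hμ₀ : μ₀ ∈ stdSimplex ℝ X) (hπ : IsPolicy πs) (hπ' : IsPolicy πs')
    (hμs : ∀ n, μs n ∈ stdSimplex ℝ X) (hμs' : ∀ n, μs' n ∈ stdSimplex ℝ X) :
    HasSum (fun n => γ ^ n *
        ∑ x, (mfFlow p μ₀ πs n x - mfFlow p μ₀ πs' n x) * (rM x (μs n) - rM x (μs' n)))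
      (totalReward p r γ μ₀ πs μs - totalReward p r γ μ₀ πs' μs
        + (totalReward p r γ μ₀ πs' μs' - totalReward p r γ μ₀ πs μs')) := by
  have hJ {πs : ℕ → X → A → ℝ} (hπ : IsPolicy πs) {μs : ℕ → X → ℝ}
      (hμs : ∀ n, μs n ∈ stdSimplex ℝ X) :=
    hasSum_totalReward (r := r) hp hp_ind hr hγ0 hγ1 hμ₀ hπ hμs
  have hsum := ((hJ hπ hμs).sub (hJ hπ' hμs)).add ((hJ hπ' hμs').sub (hJ hπ hμs'))
  refine (congrArg (HasSum · _) (funext fun n => ?_)).mp hsum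
  rw [← stageReward_exploitability_of_separable hsep (fun x => (hπ n x).2)
    (fun x => (hπ' n x).2)]
  ring

lemma eq_of_hasSum_discounted_monotonicity_nonneg {rM : X → (X → ℝ) → ℝ}
    (hmono : ∀ μ ∈ stdSimplex ℝ X, ∀ μ' ∈ stdSimplex ℝ X, μ ≠ μ' →
      ∑ x : X, (μ x - μ' x) * (rM x μ - rM x μ') < 0)
    {μs μs' : ℕ → X → ℝ} (hμs : ∀ n, μs n ∈ stdSimplex ℝ X)
    (hμs' : ∀ n, μs' n ∈ stdSimplex ℝ X) {γ s : ℝ} (hγ : 0 < γ)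
    (hs : HasSum (fun n => γ ^ n * ∑ x, (μs n x - μs' n x) * (rM x (μs n) - rM x (μs' n))) s)
    (hs0 : 0 ≤ s) : μs = μs' := by
  have hneg : ∀ n, μs n ≠ μs' n →
      γ ^ n * ∑ x, (μs n x - μs' n x) * (rM x (μs n) - rM x (μs' n)) < 0 := fun n hn =>
    mul_neg_of_pos_of_neg (pow_pos hγ n) (hmono _ (hμs n) _ (hμs' n) hn)
  have hle : ∀ n, γ ^ n * ∑ x, (μs n x - μs' n x) * (rM x (μs n) - rM x (μs' n)) ≤ 0 := by
    intro n
    by_cases hn : μs n = μs' n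
    · simp [hn]
    · exact (hneg n hn).le
  by_contra hne
  obtain ⟨N, hN⟩ := Function.ne_iff.mp hne
  linarith [hasSum_lt hle (hneg N hN) hs hasSum_zero]

end MFGUniqueness

theorem strictMonotone_unique_nash_flow_general
    {X A : Type*} [Fintype X] [Fintype A]
    (p : X → A → (X → ℝ) → X → ℝ) (r : X → A → (X → ℝ) → ℝ)
    (rA : X → A → ℝ) (rM : X → (X → ℝ) → ℝ) (γ C : ℝ)
    (hp : ∀ x a μ, μ ∈ stdSimplex ℝ X → p x a μ ∈ stdSimplex ℝ X)
    (hp_ind : ∀ x a (μ μ' : X → ℝ), p x a μ = p x a μ')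
    (hsep : ∀ x a μ, r x a μ = rA x a + rM x μ)
    (hr : ∀ x a μ, μ ∈ stdSimplex ℝ X → |r x a μ| ≤ C)
    (hγ : γ ∈ Set.Ioo (0 : ℝ) 1)
    (hmono : ∀ μ ∈ stdSimplex ℝ X, ∀ μ' ∈ stdSimplex ℝ X, μ ≠ μ' →
      ∑ x : X, (μ x - μ' x) * (rM x μ - rM x μ') < 0) :
    ∀ μ₀ ∈ stdSimplex ℝ X, ∀ (πs πs' : ℕ → X → A → ℝ) (μs μs' : ℕ → X → ℝ),
      IsMFGNash p r γ μ₀ πs μs → IsMFGNash p r γ μ₀ πs' μs' →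
      ∀ n : ℕ, μs n = μs' n := by
  rintro μ₀ hμ₀ πs πs' μs μs' ⟨hπ, rfl, hbest⟩ ⟨hπ', rfl, hbest'⟩ n
  obtain ⟨hγ0, hγ1⟩ := hγ
  have hflow := mfFlow_mem_stdSimplex hp hμ₀ hπ
  have hflow' := mfFlow_mem_stdSimplex hp hμ₀ hπ'
  have hgap := hasSum_totalReward_exploitability hp hp_ind hsep hr hγ0.le hγ1 hμ₀ hπ hπ'
    hflow hflow'
  have hgap_nonneg := add_nonneg (sub_nonneg.mpr (hbest πs' hπ')) (sub_nonneg.mpr (hbest' πs hπ))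
  exact congrFun (eq_of_hasSum_discounted_monotonicity_nonneg hmono hflow hflow' hγ0 hgap
    hgap_nonneg) n

/-- Assume the reward is separable `r(x,a,μ) = r_A(x,a) + r_M(x,μ)`,
the transition kernel does not depend on the population, and `r_M` is strictly monotone on the
simplex. Then for every `μ₀ ∈ Δ_X`, any two MFG Nash equilibria consistent with `μ₀` have the
same mean-field flow. -/
theorem strictMonotone_unique_nash_flow
    {X A : Type*} [Fintype X] [Nonempty X] [Fintype A] [Nonempty A]
    (p : X → A → (X → ℝ) → X → ℝ) (r : X → A → (X → ℝ) → ℝ)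
    (rA : X → A → ℝ) (rM : X → (X → ℝ) → ℝ) (γ C : ℝ)
    (hp : ∀ x a μ, μ ∈ stdSimplex ℝ X → p x a μ ∈ stdSimplex ℝ X)
    (hp_ind : ∀ x a (μ μ' : X → ℝ), p x a μ = p x a μ')
    (hsep : ∀ x a μ, r x a μ = rA x a + rM x μ)
    (hr : ∀ x a μ, μ ∈ stdSimplex ℝ X → |r x a μ| ≤ C)
    (hγ : γ ∈ Set.Ioo (0 : ℝ) 1)
    (hmono : ∀ μ ∈ stdSimplex ℝ X, ∀ μ' ∈ stdSimplex ℝ X, μ ≠ μ' →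
      ∑ x : X, (μ x - μ' x) * (rM x μ - rM x μ') < 0) :
    ∀ μ₀ ∈ stdSimplex ℝ X, ∀ (πs πs' : ℕ → X → A → ℝ) (μs μs' : ℕ → X → ℝ),
      IsMFGNash p r γ μ₀ πs μs → IsMFGNash p r γ μ₀ πs' μs' →
      ∀ n : ℕ, μs n = μs' n :=
  strictMonotone_unique_nash_flow_general p r rA rM γ C hp hp_ind hsep hr hγ hmono
end
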